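/- arXiv:1906.08134 — 6 statements merged into one kernel-verified Lean document; each statement's English description precedes it below -/
import Mathlib

section
/- For F(S) = S²(1 + N_g(1−S)²)/(S² + M(1−S)²) with 0 < N_g ≤ M, one has F'(S) > 0 for all S in (0,1). -/
/-! Writing F = N/D, the quotient rule numerator N'D - ND' factors as
2S(1-S)(M(1 + N_g(1-S)³) - N_g S³), and the last factor is positive because
N_g S³ < N_g ≤ M on (0,1). -/

namespace BuckleyLeverett

noncomputable def flux (M Ng S : ℝ) : ℝ :=
  S ^ 2 * (1 + Ng * (1 - S) ^ 2) / (S ^ 2 + M * (1 - S) ^ 2)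

theorem hasDerivAt_flux (M Ng S : ℝ) (hD : S ^ 2 + M * (1 - S) ^ 2 ≠ 0) :
    HasDerivAt (flux M Ng)
      (2 * S * (1 - S) * (M * (1 + Ng * (1 - S) ^ 3) - Ng * S ^ 3) /
        (S ^ 2 + M * (1 - S) ^ 2) ^ 2) S := by
  have hsub : HasDerivAt (fun x : ℝ => 1 - x) (-1) S := by
    simpa using (hasDerivAt_id S).const_sub 1
  have hsq : HasDerivAt (fun x : ℝ => x ^ 2) (2 * S) S := by
    simpa using hasDerivAt_pow 2 S
  have hnum : HasDerivAt (fun x => x ^ 2 * (1 + Ng * (1 - x) ^ 2)) _ S :=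
    hsq.mul (((hsub.pow 2).const_mul Ng).const_add 1)
  have hden : HasDerivAt (fun x => x ^ 2 + M * (1 - x) ^ 2) _ S :=
    hsq.add ((hsub.pow 2).const_mul M)
  exact (hnum.div hden hD).congr_deriv (by ring)

theorem flux_deriv_factor_pos {M Ng S : ℝ} (hNg : 0 < Ng) (hle : Ng ≤ M)
    (hS : S ∈ Set.Ioo (0 : ℝ) 1) : 0 < M * (1 + Ng * (1 - S) ^ 3) - Ng * S ^ 3 := by
  obtain ⟨hS0, hS1⟩ := hS
  have hcube_lt : Ng * S ^ 3 < Ng :=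
    mul_lt_of_lt_one_right hNg (pow_lt_one₀ hS0.le hS1 three_ne_zero)
  have hM : 0 < M := hNg.trans_le hle
  have h1S : 0 < 1 - S := sub_pos.mpr hS1
  have hcorr : 0 ≤ M * (Ng * (1 - S) ^ 3) := by positivity
  linarith

theorem deriv_flux_pos {M Ng S : ℝ} (hNg : 0 < Ng) (hle : Ng ≤ M)
    (hS : S ∈ Set.Ioo (0 : ℝ) 1) : 0 < deriv (flux M Ng) S := by
  have hM : 0 < M := hNg.trans_le hle
  obtain ⟨hS0, hS1⟩ := hS
  have hD : 0 < S ^ 2 + M * (1 - S) ^ 2 := by positivity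
  rw [(hasDerivAt_flux M Ng S hD.ne').deriv]
  have hfactor := flux_deriv_factor_pos hNg hle ⟨hS0, hS1⟩
  have h1S : 0 < 1 - S := sub_pos.mpr hS1
  positivity

end BuckleyLeverett

theorem stmt2_general (M Ng : ℝ) (hNg : 0 < Ng) (hle : Ng ≤ M) (F : ℝ → ℝ)
    (hF : ∀ S, F S = S ^ 2 * (1 + Ng * (1 - S) ^ 2) / (S ^ 2 + M * (1 - S) ^ 2)) :
    ∀ S ∈ Set.Ioo (0 : ℝ) 1, 0 < deriv F S := by
  intro S hS
  rw [funext hF]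
  exact BuckleyLeverett.deriv_flux_pos hNg hle hS

/-- For F(S) = S²(1 + N_g(1−S)²)/(S² + M(1−S)²) with 0 < N_g ≤ M,
one has F'(S) > 0 on (0,1). -/
theorem stmt2 (M Ng : ℝ) (hM : 0 < M) (hNg : 0 < Ng) (hle : Ng ≤ M) (F : ℝ → ℝ)
    (hF : ∀ S, F S = S ^ 2 * (1 + Ng * (1 - S) ^ 2) / (S ^ 2 + M * (1 - S) ^ 2)) :
    ∀ S ∈ Set.Ioo (0 : ℝ) 1, 0 < deriv F S :=
  stmt2_general M Ng hNg hle F hF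
end

section
/- Under the convex–concave assumptions on F and with S_B ∈ (0, S_o), the wave-speed function c(S_T) = (F(S_T) − F(S_B))/(S_T − S_B) is strictly increasing for S_T ∈ (S_B, S̄], where S̄ is the unique point with F'(S̄) = (F(S̄)−F(S_B))/(S̄−S_B); moreover c(S_T) → F'(S_B) as S_T → S_B⁺. -/
/-!
Write `g = tangentGap F S_B`, i.e. `g S = F'(S) (S - S_B) - (F S - F S_B)`, so that
`c' = g / (S - S_B)²`. Since `g' S = F''(S) (S - S_B)`, the function `g` increases on
`[S_B, S_o]` and decreases on `[S_o, S̄]`; it vanishes at `S_B` and, by the tangency condition,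
at `S̄`, hence is positive in between. The limit is the definition of `F'(S_B)` through
one-sided difference quotients.
-/

open Set Filter Topology

lemma pos_of_strictMonoOn_of_strictAntiOn {α β : Type*} [LinearOrder α] [Preorder β]
    {g : α → β} {a m b : α} {c : β} (hmono : StrictMonoOn g (Icc a m))
    (hanti : StrictAntiOn g (Icc m b)) (ha : c ≤ g a) (hb : c ≤ g b) {x : α}
    (hx : x ∈ Ioo a b) : c < g x := by
  rcases le_or_gt x m with hxm | hmx
  · exact ha.trans_lt (hmono ⟨le_rfl, hx.1.le.trans hxm⟩ ⟨hx.1.le, hxm⟩ hx.1)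
  · exact hb.trans_lt (hanti ⟨hmx.le, hx.2.le⟩ ⟨hmx.le.trans hx.2.le, le_rfl⟩ hx.2)

lemma tendsto_div_sub_nhdsGT {F : ℝ → ℝ} {a f' : ℝ} (hF : HasDerivAt F f' a) :
    Tendsto (fun t => (F t - F a) / (t - a)) (𝓝[>] a) (𝓝 f') :=
  ((hasDerivWithinAt_iff_tendsto_slope' (lt_irrefl a)).mp hF.hasDerivWithinAt).congr
    fun t => slope_def_field F a t

/-- `F a` minus the value at `a` of the tangent line to `F` at `S`. -/
noncomputable def tangentGap (F : ℝ → ℝ) (a S : ℝ) : ℝ :=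
  deriv F S * (S - a) - (F S - F a)

section TangentGap

variable {F : ℝ → ℝ} {U : Set ℝ} {a : ℝ}

lemma hasDerivAt_div_sub {x : ℝ} (hF : DifferentiableAt ℝ F x) (hx : x ≠ a) :
    HasDerivAt (fun t => (F t - F a) / (t - a)) (tangentGap F a x / (x - a) ^ 2) x := by
  have h := (hF.hasDerivAt.sub_const (F a)).fun_div ((hasDerivAt_id x).sub_const a)
    (sub_ne_zero.mpr hx)
  simpa only [id_eq, mul_one, tangentGap] using h

lemma strictMonoOn_div_sub (hF : DifferentiableOn ℝ F U) (hU : IsOpen U) {b : ℝ}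
    (hs : Ioc a b ⊆ U) (hgap : ∀ x ∈ Ioo a b, 0 < tangentGap F a x) :
    StrictMonoOn (fun t => (F t - F a) / (t - a)) (Ioc a b) := by
  have hdiff : ∀ x ∈ Ioc a b, DifferentiableAt ℝ F x :=
    fun x hx => hF.differentiableAt (hU.mem_nhds (hs hx))
  refine strictMonoOn_of_deriv_pos (convex_Ioc a b) ?_ ?_
  · exact fun x hx => (hasDerivAt_div_sub (hdiff x hx) hx.1.ne').continuousAt.continuousWithinAt
  · intro x hx
    rw [interior_Ioc] at hx
    rw [(hasDerivAt_div_sub (hdiff x (Ioo_subset_Ioc_self hx)) hx.1.ne').deriv]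
    exact div_pos (hgap x hx) (pow_pos (sub_pos.mpr hx.1) 2)

lemma hasDerivAt_tangentGap (hF : ContDiffOn ℝ 2 F U) (hU : IsOpen U) {x : ℝ} (hx : x ∈ U) :
    HasDerivAt (tangentGap F a) (deriv (deriv F) x * (x - a)) x := by
  have hFx : HasDerivAt F (deriv F x) x :=
    ((hF.differentiableOn (by norm_num)).differentiableAt (hU.mem_nhds hx)).hasDerivAt
  have hF'x : HasDerivAt (deriv F) (deriv (deriv F) x) x :=
    (((hF.deriv_of_isOpen (m := 1) hU (by norm_num)).differentiableOn one_ne_zero)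
      |>.differentiableAt (hU.mem_nhds hx)).hasDerivAt
  exact ((hF'x.fun_mul ((hasDerivAt_id' x).sub_const a)).fun_sub (hFx.sub_const (F a)))
    |>.congr_deriv (by ring)

lemma continuousOn_tangentGap (hF : ContDiffOn ℝ 2 F U) (hU : IsOpen U) :
    ContinuousOn (tangentGap F a) U :=
  fun _ hx => (hasDerivAt_tangentGap hF hU hx).continuousAt.continuousWithinAt

lemma strictMonoOn_tangentGap (hF : ContDiffOn ℝ 2 F U) (hU : IsOpen U) {l r : ℝ}
    (hs : Icc l r ⊆ U) (hal : a ≤ l) (hpos : ∀ x ∈ Ioo l r, 0 < deriv (deriv F) x) :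
    StrictMonoOn (tangentGap F a) (Icc l r) := by
  refine strictMonoOn_of_deriv_pos (convex_Icc l r) ((continuousOn_tangentGap hF hU).mono hs)
    fun x hx => ?_
  rw [interior_Icc] at hx
  rw [(hasDerivAt_tangentGap hF hU (hs (Ioo_subset_Icc_self hx))).deriv]
  exact mul_pos (hpos x hx) (sub_pos.mpr (hal.trans_lt hx.1))

lemma strictAntiOn_tangentGap (hF : ContDiffOn ℝ 2 F U) (hU : IsOpen U) {l r : ℝ}
    (hs : Icc l r ⊆ U) (hal : a ≤ l) (hneg : ∀ x ∈ Ioo l r, deriv (deriv F) x < 0) :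
    StrictAntiOn (tangentGap F a) (Icc l r) := by
  refine strictAntiOn_of_deriv_neg (convex_Icc l r) ((continuousOn_tangentGap hF hU).mono hs)
    fun x hx => ?_
  rw [interior_Icc] at hx
  rw [(hasDerivAt_tangentGap hF hU (hs (Ioo_subset_Icc_self hx))).deriv]
  exact mul_neg_of_neg_of_pos (hneg x hx) (sub_pos.mpr (hal.trans_lt hx.1))

end TangentGap

theorem stmt5_general (F : ℝ → ℝ) (hF : ContDiffOn ℝ 2 F (Set.Icc 0 1))
    (So : ℝ) (hSo : So ∈ Set.Ioo (0:ℝ) 1)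
    (hconv : ∀ S ∈ Set.Ioo 0 So, 0 < deriv (deriv F) S)
    (hconc : ∀ S ∈ Set.Ioo So 1, deriv (deriv F) S < 0)
    (SB : ℝ) (hSB : SB ∈ Set.Ioo (0:ℝ) So)
    (Sbar : ℝ) (hSbar : Sbar ∈ Set.Ioo SB 1)
    (htan : deriv F Sbar = (F Sbar - F SB) / (Sbar - SB)) :
    StrictMonoOn (fun ST => (F ST - F SB) / (ST - SB)) (Set.Ioc SB Sbar) ∧
      Filter.Tendsto (fun ST => (F ST - F SB) / (ST - SB))
        (nhdsWithin SB (Set.Ioi SB)) (nhds (deriv F SB)) := by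
  have hF2 : ContDiffOn ℝ 2 F (Ioo 0 1) := hF.mono Ioo_subset_Icc_self
  have hincr : StrictMonoOn (tangentGap F SB) (Icc SB So) :=
    strictMonoOn_tangentGap hF2 isOpen_Ioo (Icc_subset_Ioo hSB.1 hSo.2) le_rfl
      fun x hx => hconv x ⟨hSB.1.trans hx.1, hx.2⟩
  have hdecr : StrictAntiOn (tangentGap F SB) (Icc So Sbar) :=
    strictAntiOn_tangentGap hF2 isOpen_Ioo (Icc_subset_Ioo hSo.1 hSbar.2) hSB.2.le
      fun x hx => hconc x ⟨hx.1, hx.2.trans hSbar.2⟩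
  have hgap_SB : tangentGap F SB SB = 0 := by simp [tangentGap]
  have hgap_Sbar : tangentGap F SB Sbar = 0 := by
    rw [tangentGap, htan, div_mul_cancel₀ _ (sub_ne_zero.mpr hSbar.1.ne'), sub_self]
  have hgap_pos : ∀ x ∈ Ioo SB Sbar, 0 < tangentGap F SB x := fun x hx =>
    pos_of_strictMonoOn_of_strictAntiOn hincr hdecr hgap_SB.ge hgap_Sbar.ge hx
  refine ⟨strictMonoOn_div_sub (hF2.differentiableOn (by norm_num)) isOpen_Ioo
    (Ioc_subset_Ioo hSB.1.le hSbar.2) hgap_pos, tendsto_div_sub_nhdsGT ?_⟩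
  exact ((hF2.differentiableOn (by norm_num)).differentiableAt
    (isOpen_Ioo.mem_nhds ⟨hSB.1, hSB.2.trans hSo.2⟩)).hasDerivAt

/-- The wave-speed c(S_T) = (F(S_T) − F(S_B))/(S_T − S_B) is strictly
increasing on (S_B, S̄] and tends to F'(S_B) as S_T → S_B⁺. -/
theorem stmt5 (F : ℝ → ℝ) (hF : ContDiffOn ℝ 2 F (Set.Icc 0 1))
    (hF0 : F 0 = 0) (hF1 : F 1 = 1)
    (hF' : ∀ S ∈ Set.Ioo (0:ℝ) 1, 0 < deriv F S)
    (So : ℝ) (hSo : So ∈ Set.Ioo (0:ℝ) 1)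
    (hconv : ∀ S ∈ Set.Ioo 0 So, 0 < deriv (deriv F) S)
    (hconc : ∀ S ∈ Set.Ioo So 1, deriv (deriv F) S < 0)
    (SB : ℝ) (hSB : SB ∈ Set.Ioo (0:ℝ) So)
    (Sbar : ℝ) (hSbar : Sbar ∈ Set.Ioo SB 1)
    (htan : deriv F Sbar = (F Sbar - F SB) / (Sbar - SB))
    (huniq : ∀ S ∈ Set.Ioo SB 1, deriv F S = (F S - F SB) / (S - SB) → S = Sbar) :
    StrictMonoOn (fun ST => (F ST - F SB) / (ST - SB)) (Set.Ioc SB Sbar) ∧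
      Filter.Tendsto (fun ST => (F ST - F SB) / (ST - SB))
        (nhdsWithin SB (Set.Ioi SB)) (nhds (deriv F SB)) :=
  stmt5_general F hF So hSo hconv hconc SB hSB Sbar hSbar htan
end

section
/- Let F be convex–concave as above, fix S_B ∈ (0,S_o), and let S̃ ∈ (S_B,1) be the point where the graph of F intersects the chord from (S_B,F(S_B)) to (1,1), i.e. F(S̃) = F(S_B) + (1−F(S_B))(S̃−S_B)/(1−S_B) with S̃ ≠ S_B, 1. Then for S̃ < α < S̄ the chord ℓ(S;α) = F(S_B) + (F(α)−F(S_B))(S−S_B)/(α−S_B) intersects the graph of F at exactly one further point β(α) ∈ (α,1), and F(S) < ℓ(S;α) for S ∈ (S_B,α), F(S) > ℓ(S;α) for S ∈ (α,β(α)), and F(S) < ℓ(S;α) for S ∈ (β(α),1). -/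
/-!
Let `σ(S)` be the slope of the chord of `F` from `(S_B, F S_B)` to `(S, F S)`; for `S > S_B`,
`F S` lies below `ℓ(S; α)` exactly when `σ S < σ α`. Subtracting a line from `F` keeps it strictly
convex on `[0, S_o]` and strictly concave on `[S_o, 1]`, and with the tangency at `S̄` (which forces
`S_o < S̄`) this makes `σ` strictly increasing on `(S_B, S̄]` and strictly decreasing on `[S̄, 1]`.
As `(S̃, F S̃)` lies on the chord to `(1, 1)`, `σ S̃ = σ 1`, hence `σ 1 < σ α < σ S̄` for
`S̃ < α < S̄`: the intermediate value theorem on `[S̄, 1]` yields `β(α)`, and the sign pattern is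
read off from the monotonicity of `σ`.
-/

open Set

section Line

variable {f : ℝ → ℝ} {x t m : ℝ}

lemma lt_add_mul_sub_iff_slope_lt (hxt : x < t) :
    f t < f x + m * (t - x) ↔ slope f x t < m := by
  rw [slope_def_field, div_lt_iff₀ (sub_pos.2 hxt)]
  constructor <;> intro h <;> linarith

lemma add_mul_sub_lt_iff_lt_slope (hxt : x < t) :
    f x + m * (t - x) < f t ↔ m < slope f x t := by
  rw [slope_def_field, lt_div_iff₀ (sub_pos.2 hxt)]
  constructor <;> intro h <;> linarith

lemma eq_add_mul_sub_iff_slope_eq (hxt : x < t) :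
    f t = f x + m * (t - x) ↔ slope f x t = m := by
  rw [slope_def_field, div_eq_iff (sub_pos.2 hxt).ne']
  constructor <;> intro h <;> linarith

variable {s : Set ℝ}

lemma convexOn_line (hs : Convex ℝ s) (p m q : ℝ) : ConvexOn ℝ s fun t => p + m * (t - q) :=
  ⟨hs, fun _ _ _ _ a b _ _ hab => le_of_eq <| by
    simp only [smul_eq_mul]; linear_combination (m * q - p) * hab⟩

lemma concaveOn_line (hs : Convex ℝ s) (p m q : ℝ) : ConcaveOn ℝ s fun t => p + m * (t - q) :=
  ⟨hs, fun _ _ _ _ a b _ _ hab => le_of_eq <| by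
    simp only [smul_eq_mul]; linear_combination (p - m * q) * hab⟩

lemma StrictConvexOn.sub_line (hf : StrictConvexOn ℝ s f) (p m q : ℝ) :
    StrictConvexOn ℝ s fun t => f t - (p + m * (t - q)) :=
  hf.sub_concaveOn (concaveOn_line hf.1 p m q)

lemma StrictConcaveOn.sub_line (hf : StrictConcaveOn ℝ s f) (p m q : ℝ) :
    StrictConcaveOn ℝ s fun t => f t - (p + m * (t - q)) :=
  hf.sub_convexOn (convexOn_line hf.1 p m q)

end Line

section StrictConvexity

variable {s : Set ℝ} {f : ℝ → ℝ} {x y z : ℝ}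

lemma StrictConvexOn.lt_max_of_mem_Ioo (hf : StrictConvexOn ℝ s f) (hx : x ∈ s) (hz : z ∈ s)
    (hy : y ∈ Ioo x z) : f y < max (f x) (f z) :=
  hf.lt_on_openSegment hx hz (hy.1.trans hy.2).ne (by rwa [openSegment_eq_Ioo (hy.1.trans hy.2)])

lemma StrictConcaveOn.min_lt_of_mem_Ioo (hf : StrictConcaveOn ℝ s f) (hx : x ∈ s) (hz : z ∈ s)
    (hy : y ∈ Ioo x z) : min (f x) (f z) < f y :=
  hf.lt_on_openSegment hx hz (hy.1.trans hy.2).ne (by rwa [openSegment_eq_Ioo (hy.1.trans hy.2)])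

lemma StrictConcaveOn.lt_add_deriv_mul_sub (hf : StrictConcaveOn ℝ s f) (hx : x ∈ s) (hy : y ∈ s)
    (hxy : x ≠ y) (hd : DifferentiableAt ℝ f y) : f x < f y + deriv f y * (x - y) := by
  rcases hxy.lt_or_gt with hxy | hyx
  · have h := hf.deriv_lt_slope hx hy hxy hd
    rw [slope_def_field, lt_div_iff₀ (sub_pos.2 hxy)] at h
    linarith
  · have h := hf.slope_lt_deriv hy hx hyx hd
    rw [slope_def_field, div_lt_iff₀ (sub_pos.2 hyx)] at h
    linarith

end StrictConvexity

lemma neg_of_strictConvexOn_of_strictConcaveOn {g : ℝ → ℝ} {a c b x s t z : ℝ}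
    (hcvx : StrictConvexOn ℝ (Icc a c) g) (hccv : StrictConcaveOn ℝ (Icc c b) g)
    (hax : a ≤ x) (hxc : x ≤ c) (hxs : x < s) (hst : s < t) (htz : t < z) (hcz : c ≤ z)
    (hzb : z ≤ b) (hgx : g x = 0) (hgt : g t = 0) (hgz : 0 < g z) : g s < 0 := by
  have hconc : ∀ u, c ≤ u → u < t → g u < 0 := fun u hcu hut => by
    have h := hccv.min_lt_of_mem_Ioo ⟨hcu, by linarith⟩ ⟨hcz, hzb⟩ ⟨hut, htz⟩
    rw [hgt, min_lt_iff] at h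
    exact h.resolve_right hgz.not_gt
  rcases le_or_gt c s with hcs | hsc
  · exact hconc s hcs hst
  · have hw : g (min t c) ≤ 0 := by
      rcases lt_or_ge c t with hct | htc
      · rw [min_eq_right hct.le]; exact (hconc c le_rfl hct).le
      · rw [min_eq_left htc, hgt]
    have h := hcvx.lt_max_of_mem_Ioo ⟨hax, hxc⟩ ⟨by linarith [le_min hst.le hsc.le],
      min_le_right _ _⟩ ⟨hxs, lt_min hst hsc⟩
    rw [hgx] at h
    exact h.trans_le (max_le le_rfl hw)

section ChordSlope

variable {f : ℝ → ℝ} {a c b x₀ y : ℝ}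

lemma lt_of_deriv_eq_slope (hcvx : StrictConvexOn ℝ (Icc a c) f) (hax : a ≤ x₀) (hxy : x₀ < y)
    (hd : DifferentiableAt ℝ f y) (htan : deriv f y = slope f x₀ y) : c < y := by
  by_contra! hyc
  exact (hcvx.slope_lt_deriv ⟨hax, hxy.le.trans hyc⟩ ⟨hax.trans hxy.le, hyc⟩ hxy hd).ne htan.symm

lemma slope_lt_slope_of_deriv_eq_slope (hcvx : StrictConvexOn ℝ (Icc a c) f)
    (hccv : StrictConcaveOn ℝ (Icc c b) f) (hax : a ≤ x₀) (hxc : x₀ ≤ c) (hxy : x₀ < y)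
    (hyb : y ≤ b) (hd : DifferentiableAt ℝ f y) (htan : deriv f y = slope f x₀ y) :
    ∀ t ∈ Ioc x₀ b, t ≠ y → slope f x₀ t < slope f x₀ y := by
  intro t ht hty
  have hcy := lt_of_deriv_eq_slope hcvx hax hxy hd htan
  have hfy : f y = f x₀ + deriv f y * (y - x₀) := (eq_add_mul_sub_iff_slope_eq hxy).2 htan.symm
  have below : ∀ u ∈ Icc c b, u ≠ y → f u < f x₀ + deriv f y * (u - x₀) := fun u hu huy => by
    have := hccv.lt_add_deriv_mul_sub hu ⟨hcy.le, hyb⟩ huy hd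
    linarith
  rw [← htan, ← lt_add_mul_sub_iff_slope_lt ht.1]
  rcases le_or_gt c t with hct | htc
  · exact below t ⟨hct, ht.2⟩ hty
  · -- `f c` lies below the tangent at `y`; strict convexity on `[x₀, c]` carries this to `t`
    have h := (hcvx.sub_line (f x₀) (deriv f y) x₀).lt_max_of_mem_Ioo ⟨hax, hxc⟩
      ⟨hax.trans hxc, le_rfl⟩ ⟨ht.1, htc⟩
    have hc := below c ⟨le_rfl, hcy.le.trans hyb⟩ hcy.ne
    simp only [sub_self, mul_zero, add_zero, max_eq_left (sub_neg.2 hc).le] at h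
    exact sub_neg.1 h

lemma strictMonoOn_slope_of_deriv_eq_slope (hcvx : StrictConvexOn ℝ (Icc a c) f)
    (hccv : StrictConcaveOn ℝ (Icc c b) f) (hax : a ≤ x₀) (hxc : x₀ ≤ c) (hxy : x₀ < y)
    (hyb : y ≤ b) (hd : DifferentiableAt ℝ f y) (htan : deriv f y = slope f x₀ y) :
    StrictMonoOn (slope f x₀) (Ioc x₀ y) := by
  have hmax := slope_lt_slope_of_deriv_eq_slope hcvx hccv hax hxc hxy hyb hd htan
  intro s hs t ht hst
  rcases ht.2.eq_or_lt with rfl | hty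
  · exact hmax s ⟨hs.1, hs.2.trans hyb⟩ hst.ne
  · have h := neg_of_strictConvexOn_of_strictConcaveOn (hcvx.sub_line _ (slope f x₀ t) x₀)
      (hccv.sub_line _ _ _) hax hxc hs.1 hst hty (lt_of_deriv_eq_slope hcvx hax hxy hd htan).le
      hyb (by simp) (sub_eq_zero.2 ((eq_add_mul_sub_iff_slope_eq ht.1).2 rfl))
      (sub_pos.2 ((add_mul_sub_lt_iff_lt_slope hxy).2 (hmax t ⟨ht.1, hty.le.trans hyb⟩ hty.ne)))
    exact (lt_add_mul_sub_iff_slope_lt hs.1).1 (sub_neg.1 h)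

lemma strictAntiOn_slope_of_deriv_eq_slope (hcvx : StrictConvexOn ℝ (Icc a c) f)
    (hccv : StrictConcaveOn ℝ (Icc c b) f) (hax : a ≤ x₀) (hxc : x₀ ≤ c) (hxy : x₀ < y)
    (hd : DifferentiableAt ℝ f y) (htan : deriv f y = slope f x₀ y) :
    StrictAntiOn (slope f x₀) (Icc y b) := by
  intro s hs t ht hst
  have hmax := slope_lt_slope_of_deriv_eq_slope hcvx hccv hax hxc hxy (hs.1.trans hs.2) hd htan
  have hxs : x₀ < s := hxy.trans_le hs.1
  rcases hs.1.eq_or_lt with rfl | hys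
  · exact hmax t ⟨hxs.trans hst, ht.2⟩ hst.ne'
  · have hcy := lt_of_deriv_eq_slope hcvx hax hxy hd htan
    have h := (hccv.sub_line (f x₀) (slope f x₀ s) x₀).min_lt_of_mem_Ioo
      ⟨hcy.le, hs.1.trans hs.2⟩ ⟨hcy.le.trans ht.1, ht.2⟩ ⟨hys, hst⟩
    have hgy := sub_pos.2 ((add_mul_sub_lt_iff_lt_slope hxy).2 (hmax s ⟨hxs, hs.2⟩ hys.ne'))
    rw [sub_eq_zero.2 ((eq_add_mul_sub_iff_slope_eq hxs).2 rfl), min_lt_iff] at h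
    exact (lt_add_mul_sub_iff_slope_lt (hxs.trans hst)).1 (sub_neg.1 (h.resolve_left hgy.not_gt))

end ChordSlope

lemma ContinuousOn.slope {f : ℝ → ℝ} {s : Set ℝ} {x : ℝ} (hf : ContinuousOn f s) (hx : x ∉ s) :
    ContinuousOn (slope f x) s := by
  rw [slope_fun_def_field]
  exact (hf.sub continuousOn_const).div (continuousOn_id.sub continuousOn_const)
    fun t ht => sub_ne_zero.2 (ne_of_mem_of_not_mem ht hx)

lemma exists_eq_of_strictMonoOn_of_strictAntiOn {σ : ℝ → ℝ} {x₀ y b α : ℝ}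
    (hmono : StrictMonoOn σ (Ioc x₀ y)) (hanti : StrictAntiOn σ (Icc y b))
    (hcont : ContinuousOn σ (Icc y b)) (hyb : y ≤ b) (hα : α ∈ Ioo x₀ y) (hσb : σ b < σ α) :
    ∃ β ∈ Ioo y b, σ β = σ α ∧ (∀ t ∈ Ioo α b, σ t = σ α → t = β) ∧
      (∀ t ∈ Ioo x₀ α, σ t < σ α) ∧ (∀ t ∈ Ioo α β, σ α < σ t) ∧
      (∀ t ∈ Ioo β b, σ t < σ α) := by
  have hαI : α ∈ Ioc x₀ y := ⟨hα.1, hα.2.le⟩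
  have hx₀y : x₀ < y := hα.1.trans hα.2
  obtain ⟨β, hβ, hσβ⟩ := intermediate_value_Ioo' hyb hcont
    ⟨hσb, hmono hαI ⟨hx₀y, le_rfl⟩ hα.2⟩
  have hβI : β ∈ Icc y b := ⟨hβ.1.le, hβ.2.le⟩
  refine ⟨β, hβ, hσβ, fun t ht hσt => ?_, fun t ht => ?_, fun t ht => ?_, fun t ht => ?_⟩
  · rcases le_or_gt t y with hty | hyt
    · exact absurd hσt (hmono hαI ⟨hα.1.trans ht.1, hty⟩ ht.1).ne'
    · exact hanti.injOn ⟨hyt.le, ht.2.le⟩ hβI (hσt.trans hσβ.symm)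
  · exact hmono ⟨ht.1, (ht.2.trans hα.2).le⟩ hαI ht.2
  · rcases le_or_gt t y with hty | hyt
    · exact hmono hαI ⟨hα.1.trans ht.1, hty⟩ ht.1
    · exact hσβ ▸ hanti ⟨hyt.le, (ht.2.trans hβ.2).le⟩ hβI ht.2
  · exact hσβ ▸ hanti hβI ⟨(hβ.1.trans ht.1).le, ht.2.le⟩ ht.1

lemma strictConvexOn_Icc_of_deriv2_pos {f : ℝ → ℝ} {a b : ℝ} (hf : ContinuousOn f (Icc a b))
    (hf'' : ∀ x ∈ Ioo a b, 0 < deriv (deriv f) x) : StrictConvexOn ℝ (Icc a b) f :=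
  strictConvexOn_of_deriv2_pos (convex_Icc a b) hf fun x hx => by
    rw [interior_Icc] at hx
    simpa using hf'' x hx

lemma strictConcaveOn_Icc_of_deriv2_neg {f : ℝ → ℝ} {a b : ℝ} (hf : ContinuousOn f (Icc a b))
    (hf'' : ∀ x ∈ Ioo a b, deriv (deriv f) x < 0) : StrictConcaveOn ℝ (Icc a b) f :=
  strictConcaveOn_of_deriv2_neg (convex_Icc a b) hf fun x hx => by
    rw [interior_Icc] at hx
    simpa using hf'' x hx

theorem stmt6_general (F : ℝ → ℝ) (hF : ContDiffOn ℝ 2 F (Set.Icc 0 1))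
    (hF1 : F 1 = 1)
    (So : ℝ) (hSo : So ∈ Set.Ioo (0:ℝ) 1)
    (hconv : ∀ S ∈ Set.Ioo 0 So, 0 < deriv (deriv F) S)
    (hconc : ∀ S ∈ Set.Ioo So 1, deriv (deriv F) S < 0)
    (SB Stilde Sbar : ℝ)
    (hSB : SB ∈ Set.Ioo (0:ℝ) So)
    (hStilde : Stilde ∈ Set.Ioo SB 1 ∧
      F Stilde = F SB + (1 - F SB) * (Stilde - SB) / (1 - SB))
    (hSbar : Sbar ∈ Set.Ioo SB 1 ∧
      deriv F Sbar = (F Sbar - F SB) / (Sbar - SB)) :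
    ∀ α ∈ Set.Ioo Stilde Sbar,
      ∃ β ∈ Set.Ioo α 1,
        F β = F SB + (F α - F SB) / (α - SB) * (β - SB) ∧
        (∀ b ∈ Set.Ioo α 1, F b = F SB + (F α - F SB) / (α - SB) * (b - SB) → b = β) ∧
        (∀ S ∈ Set.Ioo SB α, F S < F SB + (F α - F SB) / (α - SB) * (S - SB)) ∧
        (∀ S ∈ Set.Ioo α β, F SB + (F α - F SB) / (α - SB) * (S - SB) < F S) ∧
        (∀ S ∈ Set.Ioo β 1, F S < F SB + (F α - F SB) / (α - SB) * (S - SB)) := by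
  intro α hα
  obtain ⟨⟨hSBSbar, hSbar1⟩, htan⟩ := hSbar
  obtain ⟨⟨hSBSt, -⟩, hStEq⟩ := hStilde
  have hcont : ContinuousOn F (Icc 0 1) := hF.continuousOn
  have hcvx := strictConvexOn_Icc_of_deriv2_pos (hcont.mono (Icc_subset_Icc le_rfl hSo.2.le)) hconv
  have hccv := strictConcaveOn_Icc_of_deriv2_neg (hcont.mono (Icc_subset_Icc hSo.1.le le_rfl)) hconc
  have hd : DifferentiableAt ℝ F Sbar :=
    (hF.contDiffAt (Icc_mem_nhds (hSB.1.trans hSBSbar) hSbar1)).differentiableAt two_ne_zero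
  rw [← slope_def_field] at htan
  have hSBα : SB < α := hSBSt.trans hα.1
  have hmono := strictMonoOn_slope_of_deriv_eq_slope hcvx hccv hSB.1.le hSB.2.le hSBSbar
    hSbar1.le hd htan
  have hσ1 : slope F SB 1 < slope F SB α := by
    have hσSt : slope F SB Stilde = slope F SB 1 :=
      (eq_add_mul_sub_iff_slope_eq hSBSt).1 (by rw [hStEq, slope_def_field, hF1]; ring)
    rw [← hσSt]
    exact hmono ⟨hSBSt, (hα.1.trans hα.2).le⟩ ⟨hSBα, hα.2.le⟩ hα.1
  obtain ⟨β, hβ, hσβ, huniq, hleft, hmid, hright⟩ := exists_eq_of_strictMonoOn_of_strictAntiOn hmono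
    (strictAntiOn_slope_of_deriv_eq_slope hcvx hccv hSB.1.le hSB.2.le hSBSbar hd htan)
    ((hcont.mono (Icc_subset_Icc (hSB.1.trans hSBSbar).le le_rfl)).slope
      fun h => hSBSbar.not_ge h.1) hSbar1.le ⟨hSBα, hα.2⟩ hσ1
  have hSBβ : SB < β := hSBSbar.trans hβ.1
  rw [← slope_def_field]
  refine ⟨β, ⟨hα.2.trans hβ.1, hβ.2⟩, (eq_add_mul_sub_iff_slope_eq hSBβ).2 hσβ,
    fun b hb hbβ => huniq b hb ((eq_add_mul_sub_iff_slope_eq (hSBα.trans hb.1)).1 hbβ),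
    fun S hS => (lt_add_mul_sub_iff_slope_lt hS.1).2 (hleft S hS),
    fun S hS => (add_mul_sub_lt_iff_lt_slope (hSBα.trans hS.1)).2 (hmid S hS),
    fun S hS => (lt_add_mul_sub_iff_slope_lt (hSBβ.trans hS.1)).2 (hright S hS)⟩

/-- For S̃ < α < S̄ the chord ℓ(·;α) through (S_B,F(S_B)) and (α,F(α))
meets the graph of F at exactly one further point β(α) ∈ (α,1), with F below the
chord on (S_B,α), above on (α,β(α)), and below on (β(α),1). -/
theorem stmt6 (F : ℝ → ℝ) (hF : ContDiffOn ℝ 2 F (Set.Icc 0 1))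
    (hF0 : F 0 = 0) (hF1 : F 1 = 1)
    (hF' : ∀ S ∈ Set.Ioo (0:ℝ) 1, 0 < deriv F S)
    (So : ℝ) (hSo : So ∈ Set.Ioo (0:ℝ) 1)
    (hconv : ∀ S ∈ Set.Ioo 0 So, 0 < deriv (deriv F) S)
    (hconc : ∀ S ∈ Set.Ioo So 1, deriv (deriv F) S < 0)
    (SB Sunder Stilde Sbar : ℝ)
    (hSB : SB ∈ Set.Ioo (0:ℝ) So) (hSBu : SB < Sunder)
    (hSunder : Sunder ∈ Set.Ioo (0:ℝ) 1 ∧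
      deriv F Sunder = (1 - F Sunder) / (1 - Sunder))
    (hStilde : Stilde ∈ Set.Ioo SB 1 ∧
      F Stilde = F SB + (1 - F SB) * (Stilde - SB) / (1 - SB))
    (hSbar : Sbar ∈ Set.Ioo SB 1 ∧
      deriv F Sbar = (F Sbar - F SB) / (Sbar - SB)) :
    ∀ α ∈ Set.Ioo Stilde Sbar,
      ∃ β ∈ Set.Ioo α 1,
        F β = F SB + (F α - F SB) / (α - SB) * (β - SB) ∧
        (∀ b ∈ Set.Ioo α 1, F b = F SB + (F α - F SB) / (α - SB) * (b - SB) → b = β) ∧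
        (∀ S ∈ Set.Ioo SB α, F S < F SB + (F α - F SB) / (α - SB) * (S - SB)) ∧
        (∀ S ∈ Set.Ioo α β, F SB + (F α - F SB) / (α - SB) * (S - SB) < F S) ∧
        (∀ S ∈ Set.Ioo β 1, F S < F SB + (F α - F SB) / (α - SB) * (S - SB)) :=
  stmt6_general F hF hF1 So hSo hconv hconc SB Stilde Sbar hSB hStilde hSbar
end

section
/- Let G : [S_B, S_m] → ℝ be continuous with G(S_B) = 0, let p ∈ C¹([S_B,S_m]) be strictly decreasing, let c, τ > 0, and suppose w ∈ C¹((S_B,S_m)) ∩ C([S_B,S_m]) satisfies w(S_B) = p(S_B), w(S) < p(S) on (S_B, S_m), and the ODE w'(S) = cτ·G(S)/(p(S) − w(S)) on (S_B, S_m). Then ((p−w)²)'(S) ≤ −2cτ·G(S) for all S ∈ (S_B, S_m), and hence (p(S) − w(S))² ≤ 2cτ·Φ(S) where Φ(S) = −∫_{S_B}^{S} G. -/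
/-!
Since `p` is decreasing, `p' ≤ 0`, and the ODE gives `(p - w) w' = cτG`; hence
`((p - w)²)' = 2(p - w)p' - 2cτG ≤ -2cτG`. So `(p - w)² + 2cτ∫_{S_B}^S G` is antitone on
`(S_B, S_m)`, and it tends to `0` as `S → S_B⁺`: the integral vanishes in the limit, and
`0 < p - w ≤ p(S_B) - w = w(S_B) - w → 0` even though `p` need not be continuous at `S_B`.
-/

open Set Filter Topology intervalIntegral

lemma AntitoneOn.deriv_nonpos_of_isOpen {g : ℝ → ℝ} {s : Set ℝ} {x : ℝ} (hg : AntitoneOn g s)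
    (hs : IsOpen s) (hx : x ∈ s) : deriv g x ≤ 0 := by
  rw [← derivWithin_of_isOpen hs hx]
  exact hg.derivWithin_nonpos

lemma deriv_sq_sub_le_of_mul_deriv_eq {p w : ℝ → ℝ} {x k : ℝ} (hp : DifferentiableAt ℝ p x)
    (hw : DifferentiableAt ℝ w x) (hp' : deriv p x ≤ 0) (hle : w x ≤ p x)
    (hode : (p x - w x) * deriv w x = k) :
    deriv (fun t => (p t - w t) ^ 2) x ≤ -2 * k := by
  have hsq : HasDerivAt (fun t => (p t - w t) ^ 2)
      (2 * (p x - w x) ^ 1 * (deriv p x - deriv w x)) x :=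
    (hp.hasDerivAt.sub hw.hasDerivAt).pow 2
  rw [hsq.deriv, ← hode]
  nlinarith [mul_nonpos_of_nonneg_of_nonpos (sub_nonneg.2 hle) hp']

lemma tendsto_sub_nhdsGT_zero_of_antitoneOn {p w : ℝ → ℝ} {a b : ℝ} (hab : a < b)
    (hp : AntitoneOn p (Icc a b)) (hw : Tendsto w (𝓝[>] a) (𝓝 (p a)))
    (hlt : ∀ t ∈ Ioo a b, w t < p t) : Tendsto (fun t => p t - w t) (𝓝[>] a) (𝓝 0) := by
  have hupper : Tendsto (fun t => p a - w t) (𝓝[>] a) (𝓝 0) := by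
    simpa using (tendsto_const_nhds (x := p a)).sub hw
  refine tendsto_of_tendsto_of_tendsto_of_le_of_le' tendsto_const_nhds hupper ?_ ?_
  all_goals filter_upwards [Ioo_mem_nhdsGT hab] with t ht
  · exact (sub_pos.2 (hlt t ht)).le
  · exact sub_le_sub_right (hp ⟨le_rfl, hab.le⟩ (Ioo_subset_Icc_self ht) ht.1.le) _

section Primitive

variable {E : Type*} [NormedAddCommGroup E] [NormedSpace ℝ E] {G : ℝ → E}
  {a b : ℝ}

lemma ContinuousOn.hasDerivAt_primitive_of_mem_Ioo [CompleteSpace E]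
    (hG : ContinuousOn G (Icc a b)) {t : ℝ} (ht : t ∈ Ioo a b) :
    HasDerivAt (fun u => ∫ s in a..u, G s) (G t) t := by
  have hsub : uIcc a t ⊆ Icc a b := by
    rw [uIcc_of_le ht.1.le]
    exact Icc_subset_Icc_right ht.2.le
  exact integral_hasDerivAt_right (hG.mono hsub).intervalIntegrable
    ((hG.mono Ioo_subset_Icc_self).stronglyMeasurableAtFilter isOpen_Ioo t ht)
    (hG.continuousAt (Icc_mem_nhds ht.1 ht.2))

lemma ContinuousOn.tendsto_primitive_nhdsGT (hG : ContinuousOn G (Icc a b)) (hab : a < b) :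
    Tendsto (fun u => ∫ s in a..u, G s) (𝓝[>] a) (𝓝 0) := by
  rw [← uIcc_of_le hab.le] at hG
  have hcont := continuousOn_primitive_interval
    (hG.integrableOn_compact (μ := MeasureTheory.volume) isCompact_uIcc)
    a left_mem_uIcc
  rw [uIcc_of_le hab.le] at hcont
  simpa using (hcont.mono_of_mem_nhdsWithin (Icc_mem_nhdsGT hab)).tendsto

end Primitive

lemma AntitoneOn.le_of_tendsto_nhdsGT {f : ℝ → ℝ} {a b x L : ℝ} (hf : AntitoneOn f (Ioo a b))
    (hlim : Tendsto f (𝓝[>] a) (𝓝 L)) (hx : x ∈ Ioo a b) : f x ≤ L := by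
  refine ge_of_tendsto hlim ?_
  filter_upwards [Ioo_mem_nhdsGT hx.1] with t ht
  exact hf ⟨ht.1, ht.2.trans hx.2⟩ hx ht.2.le

lemma le_neg_mul_integral_of_deriv_le {g G : ℝ → ℝ} {a b k x : ℝ}
    (hG : ContinuousOn G (Icc a b)) (hg : ∀ t ∈ Ioo a b, DifferentiableAt ℝ g t)
    (hg' : ∀ t ∈ Ioo a b, deriv g t ≤ -(k * G t)) (hlim : Tendsto g (𝓝[>] a) (𝓝 0))
    (hx : x ∈ Ioo a b) : g x ≤ k * -∫ t in a..x, G t := by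
  have hab : a < b := hx.1.trans hx.2
  set ψ : ℝ → ℝ := fun t => g t + k * ∫ s in a..t, G s
  have hψ : ∀ t ∈ Ioo a b, HasDerivAt ψ (deriv g t + k * G t) t := fun t ht =>
    (hg t ht).hasDerivAt.add ((hG.hasDerivAt_primitive_of_mem_Ioo ht).const_mul k)
  have hanti : AntitoneOn ψ (Ioo a b) := by
    refine antitoneOn_of_deriv_nonpos (convex_Ioo a b)
      (fun t ht => (hψ t ht).continuousAt.continuousWithinAt) ?_ ?_ <;> rw [interior_Ioo]
    · exact fun t ht => (hψ t ht).differentiableAt.differentiableWithinAt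
    · intro t ht
      rw [(hψ t ht).deriv]
      linarith [hg' t ht]
  have hψlim : Tendsto ψ (𝓝[>] a) (𝓝 0) := by
    simpa using hlim.add ((hG.tendsto_primitive_nhdsGT hab).const_mul k)
  have := hanti.le_of_tendsto_nhdsGT hψlim hx
  simp only [ψ] at this
  linarith

theorem stmt7_general (SB Sm c τ : ℝ)
    (G p w : ℝ → ℝ)
    (hG : ContinuousOn G (Set.Icc SB Sm))
    (hp : StrictAntiOn p (Set.Icc SB Sm))
    (hpd : ∀ S ∈ Set.Ioo SB Sm, DifferentiableAt ℝ p S)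
    (hwc : ContinuousOn w (Set.Icc SB Sm))
    (hwd : ∀ S ∈ Set.Ioo SB Sm, DifferentiableAt ℝ w S)
    (hwB : w SB = p SB)
    (hwlt : ∀ S ∈ Set.Ioo SB Sm, w S < p S)
    (hode : ∀ S ∈ Set.Ioo SB Sm, deriv w S = c * τ * G S / (p S - w S)) :
    (∀ S ∈ Set.Ioo SB Sm,
        deriv (fun t => (p t - w t) ^ 2) S ≤ -2 * c * τ * G S) ∧
      ∀ S ∈ Set.Ioo SB Sm,
        (p S - w S) ^ 2 ≤ 2 * c * τ * (-(∫ t in SB..S, G t)) := by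
  have hderiv : ∀ S ∈ Ioo SB Sm, deriv (fun t => (p t - w t) ^ 2) S ≤ -2 * c * τ * G S := by
    intro S hS
    have hp' := (hp.antitoneOn.mono Ioo_subset_Icc_self).deriv_nonpos_of_isOpen isOpen_Ioo hS
    have hmul : (p S - w S) * deriv w S = c * τ * G S := by
      rw [hode S hS, mul_div_cancel₀ _ (sub_pos.2 (hwlt S hS)).ne']
    exact (deriv_sq_sub_le_of_mul_deriv_eq (hpd S hS) (hwd S hS) hp' (hwlt S hS).le hmul).trans_eq
      (by ring)
  refine ⟨hderiv, fun S hS => ?_⟩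
  have hlt : SB < Sm := hS.1.trans hS.2
  have hw : Tendsto w (𝓝[>] SB) (𝓝 (p SB)) :=
    hwB ▸ ((hwc SB ⟨le_rfl, hlt.le⟩).mono_of_mem_nhdsWithin (Icc_mem_nhdsGT hlt)).tendsto
  have hlim : Tendsto (fun t => (p t - w t) ^ 2) (𝓝[>] SB) (𝓝 0) := by
    simpa using (tendsto_sub_nhdsGT_zero_of_antitoneOn hlt hp.antitoneOn hw hwlt).pow 2
  exact le_neg_mul_integral_of_deriv_le hG (fun t ht => ((hpd t ht).sub (hwd t ht)).pow 2)
    (fun t ht => (hderiv t ht).trans_eq (by ring)) hlim hS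

/-- Pointwise bound ((p−w)²)' ≤ −2cτG and hence
(p−w)² ≤ 2cτΦ with Φ(S) = −∫_{S_B}^S G. -/
theorem stmt7 (SB Sm c τ : ℝ) (hS : SB < Sm) (hc : 0 < c) (hτ : 0 < τ)
    (G p w : ℝ → ℝ)
    (hG : ContinuousOn G (Set.Icc SB Sm)) (hGB : G SB = 0)
    (hp : StrictAntiOn p (Set.Icc SB Sm))
    (hpd : ∀ S ∈ Set.Ioo SB Sm, DifferentiableAt ℝ p S)
    (hwc : ContinuousOn w (Set.Icc SB Sm))
    (hwd : ∀ S ∈ Set.Ioo SB Sm, DifferentiableAt ℝ w S)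
    (hwB : w SB = p SB)
    (hwlt : ∀ S ∈ Set.Ioo SB Sm, w S < p S)
    (hode : ∀ S ∈ Set.Ioo SB Sm, deriv w S = c * τ * G S / (p S - w S)) :
    (∀ S ∈ Set.Ioo SB Sm,
        deriv (fun t => (p t - w t) ^ 2) S ≤ -2 * c * τ * G S) ∧
      ∀ S ∈ Set.Ioo SB Sm,
        (p S - w S) ^ 2 ≤ 2 * c * τ * (-(∫ t in SB..S, G t)) :=
  stmt7_general SB Sm c τ G p w hG hp hpd hwc hwd hwB hwlt hode
end

section
/- Let v₁, v₂ > 0 on (S_B, S_m] solve (v_k²)'(S) = 2 v_k(S) p'(S) − 2 d_k G(S) with v_k(S_B) = 0, where p' < 0, d₁ < d₂, and suppose v₁ ≤ v₂ on (S_B, S_m]. Then for all S ∈ (S_B, S_m]: 0 ≤ v₂(S)² − v₁(S)² ≤ 2(d₂ − d₁) Φ(S), where Φ(S) = −∫_{S_B}^S G. -/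
/-! The difference `u = v₂² - v₁²` satisfies `u' = 2 (v₂ - v₁) p' - 2 (d₂ - d₁) G`, and the first
term is `≤ 0` because `v₁ ≤ v₂` and `p' < 0`. Integrating `u' ≤ -2 (d₂ - d₁) G` from `S_B`, where
`u` vanishes, gives the upper bound; the lower bound is `0 ≤ v₁ ≤ v₂`. -/

open Set intervalIntegral

theorem sq_sub_sq_sub_le_mul_neg_integral {a b d₁ d₂ : ℝ} {v₁ v₂ p' G : ℝ → ℝ} (hab : a ≤ b)
    (hv₁ : ContinuousOn v₁ (Icc a b)) (hv₂ : ContinuousOn v₂ (Icc a b))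
    (hG : MeasureTheory.IntegrableOn G (Icc a b))
    (hode₁ : ∀ x ∈ Ioo a b, HasDerivAt (fun t => v₁ t ^ 2) (2 * v₁ x * p' x - 2 * d₁ * G x) x)
    (hode₂ : ∀ x ∈ Ioo a b, HasDerivAt (fun t => v₂ t ^ 2) (2 * v₂ x * p' x - 2 * d₂ * G x) x)
    (hle : ∀ x ∈ Ioo a b, v₁ x ≤ v₂ x) (hp' : ∀ x ∈ Ioo a b, p' x ≤ 0) :
    (v₂ b ^ 2 - v₁ b ^ 2) - (v₂ a ^ 2 - v₁ a ^ 2) ≤ 2 * (d₂ - d₁) * (-(∫ t in a..b, G t)) := by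
  have hu' : ∀ x ∈ Ioo a b, (2 * v₂ x * p' x - 2 * d₂ * G x) - (2 * v₁ x * p' x - 2 * d₁ * G x)
      ≤ 2 * (d₂ - d₁) * -G x := fun x hx => by
    linarith [mul_nonpos_of_nonneg_of_nonpos (sub_nonneg.2 (hle x hx)) (hp' x hx)]
  calc (v₂ b ^ 2 - v₁ b ^ 2) - (v₂ a ^ 2 - v₁ a ^ 2)
      ≤ ∫ t in a..b, 2 * (d₂ - d₁) * -G t :=
        sub_le_integral_of_hasDeriv_right_of_le hab ((hv₂.pow 2).sub (hv₁.pow 2))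
          (fun x hx => ((hode₂ x hx).sub (hode₁ x hx)).hasDerivWithinAt)
          (hG.neg.const_mul _) hu'
    _ = 2 * (d₂ - d₁) * (-(∫ t in a..b, G t)) := by
        rw [integral_const_mul, integral_neg]

theorem stmt11_general (SB Sm d₁ d₂ : ℝ)
    (v₁ v₂ p G : ℝ → ℝ)
    (hG : ContinuousOn G (Set.Icc SB Sm))
    (hp' : ∀ S ∈ Set.Ioo SB Sm, deriv p S < 0)
    (hv₁0 : v₁ SB = 0) (hv₂0 : v₂ SB = 0)
    (hv₁pos : ∀ S ∈ Set.Ioc SB Sm, 0 < v₁ S)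
    (hv₁c : ContinuousOn v₁ (Set.Icc SB Sm)) (hv₂c : ContinuousOn v₂ (Set.Icc SB Sm))
    (hode₁ : ∀ S ∈ Set.Ioo SB Sm,
      HasDerivAt (fun t => v₁ t ^ 2) (2 * v₁ S * deriv p S - 2 * d₁ * G S) S)
    (hode₂ : ∀ S ∈ Set.Ioo SB Sm,
      HasDerivAt (fun t => v₂ t ^ 2) (2 * v₂ S * deriv p S - 2 * d₂ * G S) S)
    (hle : ∀ S ∈ Set.Ioc SB Sm, v₁ S ≤ v₂ S) :
    ∀ S ∈ Set.Ioc SB Sm,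
      0 ≤ v₂ S ^ 2 - v₁ S ^ 2 ∧
        v₂ S ^ 2 - v₁ S ^ 2 ≤ 2 * (d₂ - d₁) * (-(∫ t in SB..S, G t)) := by
  intro S hSI
  have hIcc : Icc SB S ⊆ Icc SB Sm := Icc_subset_Icc_right hSI.2
  have hIoo : Ioo SB S ⊆ Ioo SB Sm := Ioo_subset_Ioo_right hSI.2
  refine ⟨sub_nonneg.2 (pow_le_pow_left₀ (hv₁pos S hSI).le (hle S hSI) 2), ?_⟩
  have hbound := sq_sub_sq_sub_le_mul_neg_integral hSI.1.le (hv₁c.mono hIcc) (hv₂c.mono hIcc)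
    ((hG.mono hIcc).integrableOn_Icc) (fun x hx => hode₁ x (hIoo hx))
    (fun x hx => hode₂ x (hIoo hx)) (fun x hx => hle x (Ioo_subset_Ioc_self (hIoo hx)))
    (fun x hx => (hp' x (hIoo hx)).le)
  simpa [hv₁0, hv₂0] using hbound

/-- Continuous dependence: 0 ≤ v₂² − v₁² ≤ 2(d₂−d₁)Φ with
Φ(S) = −∫_{S_B}^S G. -/
theorem stmt11 (SB Sm d₁ d₂ : ℝ) (hS : SB < Sm) (hd : d₁ < d₂)
    (v₁ v₂ p G : ℝ → ℝ)
    (hG : ContinuousOn G (Set.Icc SB Sm)) (hGB : G SB = 0)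
    (hp' : ∀ S ∈ Set.Ioo SB Sm, deriv p S < 0)
    (hv₁0 : v₁ SB = 0) (hv₂0 : v₂ SB = 0)
    (hv₁pos : ∀ S ∈ Set.Ioc SB Sm, 0 < v₁ S)
    (hv₂pos : ∀ S ∈ Set.Ioc SB Sm, 0 < v₂ S)
    (hv₁c : ContinuousOn v₁ (Set.Icc SB Sm)) (hv₂c : ContinuousOn v₂ (Set.Icc SB Sm))
    (hode₁ : ∀ S ∈ Set.Ioo SB Sm,
      HasDerivAt (fun t => v₁ t ^ 2) (2 * v₁ S * deriv p S - 2 * d₁ * G S) S)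
    (hode₂ : ∀ S ∈ Set.Ioo SB Sm,
      HasDerivAt (fun t => v₂ t ^ 2) (2 * v₂ S * deriv p S - 2 * d₂ * G S) S)
    (hle : ∀ S ∈ Set.Ioc SB Sm, v₁ S ≤ v₂ S) :
    ∀ S ∈ Set.Ioc SB Sm,
      0 ≤ v₂ S ^ 2 - v₁ S ^ 2 ∧
        v₂ S ^ 2 - v₁ S ^ 2 ≤ 2 * (d₂ - d₁) * (-(∫ t in SB..S, G t)) :=
  stmt11_general SB Sm d₁ d₂ v₁ v₂ p G hG hp' hv₁0 hv₂0 hv₁pos hv₁c hv₂c hode₁ hode₂ hle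
end

section
/- Let p be C¹ and strictly decreasing on [S_B, S_T], let G be C¹ with G(S_T) = 0 and G ≤ 0 on [S_B, S_T], set m₀ = sup_{[S_B,S_T]} G' < ∞ and P̲ = min_{[S_B,S_T]}(−p') > 0, and suppose w solves w' = cτG/(p−w) with w(S_B)=p(S_B), w < p on (S_B, S_T). If 0 < τ < P̲²/(4cm₀) and r ∈ (r⁻, r⁺) where r^± = (P̲/2)(1 ± √(1 − 4cτm₀/P̲²)), then w(S) > p(S) + r(S − S_T) for all S ∈ (S_B, S_T). -/
/-!
Fence the orbit `w` from below by the line `ℓ(S) = p(S) + r'(S - ST)`. At a contact point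
`p - w = r'(ST - S)`, and `G(S) ≥ -m₀(ST - S)` by the mean value theorem, so
`w' ≥ -cτm₀/r' > p' + r' = ℓ'` exactly because `r'² - P̲r' + cτm₀ < 0`; hence `w` never drops
below `ℓ`. Taking `r' < r` in the open interval of admissible slopes makes the inequality strict.
-/

open Set Filter Topology

theorem quadratic_neg_of_mem_Ioo_roots {P q r : ℝ}
    (hr : r ∈ Ioo (P / 2 * (1 - √(1 - 4 * q / P ^ 2))) (P / 2 * (1 + √(1 - 4 * q / P ^ 2)))) :
    r ^ 2 - P * r + q < 0 := by
  set s := √(1 - 4 * q / P ^ 2)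
  have hprod : 0 < (r - P / 2 * (1 - s)) * (P / 2 * (1 + s) - r) :=
    mul_pos (sub_pos.2 hr.1) (sub_pos.2 hr.2)
  rcases lt_or_ge (1 - 4 * q / P ^ 2) 0 with hd | hd
  · have hs : s = 0 := Real.sqrt_eq_zero_of_nonpos hd.le
    simp only [hs] at hr
    linarith [hr.1, hr.2]
  rcases eq_or_ne P 0 with rfl | hP
  · linarith [hr.1, hr.2]
  have hs : P ^ 2 * s ^ 2 = P ^ 2 - 4 * q := by
    rw [Real.sq_sqrt hd]
    field_simp
  nlinarith

theorem add_lt_mul_div_of_quadratic_neg {k m P r D d g : ℝ} (hk : 0 ≤ k) (hr : 0 < r)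
    (hD : 0 < D) (hquad : r ^ 2 - P * r + k * m < 0) (hd : d ≤ -P) (hg : -(m * D) ≤ g) :
    d + r < k * g / (r * D) := by
  rw [lt_div_iff₀ (mul_pos hr hD)]
  calc (d + r) * (r * D) ≤ (r - P) * (r * D) := by gcongr; linarith
    _ < -(k * (m * D)) := by nlinarith
    _ ≤ k * g := by nlinarith

theorem line_le_orbit_of_quadratic_neg {SB ST k m₀ P r : ℝ} {p G w : ℝ → ℝ}
    (hk : 0 ≤ k) (hr : 0 < r) (hquad : r ^ 2 - P * r + k * m₀ < 0)
    (hpc : ContinuousOn p (Icc SB ST)) (hpd : DifferentiableOn ℝ p (Ioo SB ST))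
    (hP : ∀ S ∈ Ioo SB ST, P ≤ -deriv p S)
    (hG : ∀ S ∈ Ioo SB ST, -(m₀ * (ST - S)) ≤ G S)
    (hwB : w SB = p SB) (hwc : ContinuousOn w (Icc SB ST))
    (hode : ∀ S ∈ Ioo SB ST, HasDerivAt w (k * G S / (p S - w S)) S) :
    ∀ S ∈ Ioo SB ST, p S + r * (S - ST) ≤ w S := by
  intro S₀ hS₀
  set ℓ : ℝ → ℝ := fun S => p S + r * (S - ST)
  have hℓ : ∀ S ∈ Ioo SB ST, HasDerivAt ℓ (deriv p S + r) S := fun S hS => by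
    simpa using ((hpd.differentiableAt (Ioo_mem_nhds hS.1 hS.2)).hasDerivAt).fun_add
      (((hasDerivAt_id' S).sub_const ST).const_mul r)
  -- `w` need not be differentiable at `SB`, so the fence starts at a nearby point where `ℓ < w`.
  obtain ⟨a, ha, hℓa⟩ : ∃ a ∈ Ioo SB S₀, ℓ a < w a := by
    have hSB : SB ∈ Ico SB ST := ⟨le_rfl, hS₀.1.trans hS₀.2⟩
    have hlt : ℓ SB < w SB := by simp only [ℓ, hwB]; nlinarith [hS₀.1, hS₀.2]
    have hev : ∀ᶠ S in 𝓝[Icc SB ST] SB, ℓ S < w S :=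
      Filter.Tendsto.eventually_lt
        ((hpc.add (continuousOn_const.mul (continuousOn_id.sub continuousOn_const)))
          SB (Ico_subset_Icc_self hSB))
        (hwc SB (Ico_subset_Icc_self hSB)) hlt
    have hev' : ∀ᶠ S in 𝓝[>] SB, ℓ S < w S := nhdsWithin_le_of_mem (Icc_mem_nhdsGT_of_mem hSB) hev
    obtain ⟨a, hℓa, ha⟩ := (hev'.and (Ioo_mem_nhdsGT hS₀.1)).exists
    exact ⟨a, ha, hℓa⟩
  have hsub : Icc a S₀ ⊆ Ioo SB ST := Icc_subset_Ioo ha.1 hS₀.2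
  refine image_le_of_deriv_right_lt_deriv_boundary'
    (fun S hS => (hℓ S (hsub hS)).continuousAt.continuousWithinAt)
    (fun S hS => (hℓ S (hsub (Ico_subset_Icc_self hS))).hasDerivWithinAt) hℓa.le
    (hwc.mono (hsub.trans Ioo_subset_Icc_self))
    (fun S hS => (hode S (hsub (Ico_subset_Icc_self hS))).hasDerivWithinAt) ?_
    ⟨ha.2.le, le_rfl⟩
  intro S hS hcontact
  have hS' := hsub (Ico_subset_Icc_self hS)
  have hgap : p S - w S = r * (ST - S) := by simp only [ℓ] at hcontact; linarith
  rw [hgap]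
  exact add_lt_mul_div_of_quadratic_neg hk hr (sub_pos.2 hS'.2) hquad
    (by linarith [hP S hS']) (hG S hS')

theorem stmt13_general (SB ST c τ m₀ Pl r : ℝ) (hS : SB < ST) (hc : 0 < c) (hτ : 0 < τ)
    (hm₀ : 0 < m₀) (hPl : 0 < Pl)
    (p G w : ℝ → ℝ)
    (hpc : ContDiffOn ℝ 1 p (Set.Icc SB ST))
    (hP : ∀ S ∈ Set.Icc SB ST, Pl ≤ -deriv p S)
    (hGc : ContDiffOn ℝ 1 G (Set.Icc SB ST)) (hGT : G ST = 0)
    (hm : ∀ S ∈ Set.Icc SB ST, deriv G S ≤ m₀)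
    (hwB : w SB = p SB)
    (hwc : ContinuousOn w (Set.Icc SB ST))
    (hode : ∀ S ∈ Set.Ioo SB ST, HasDerivAt w (c * τ * G S / (p S - w S)) S)
    (hr : r ∈ Set.Ioo (Pl / 2 * (1 - Real.sqrt (1 - 4 * c * τ * m₀ / Pl ^ 2)))
                      (Pl / 2 * (1 + Real.sqrt (1 - 4 * c * τ * m₀ / Pl ^ 2)))) :
    ∀ S ∈ Set.Ioo SB ST, p S + r * (S - ST) < w S := by
  intro S₀ hS₀
  rw [show 4 * c * τ * m₀ = 4 * (c * τ * m₀) by ring] at hr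
  obtain ⟨r', hr'lo, hr'r⟩ := exists_between hr.1
  have hquad := quadratic_neg_of_mem_Ioo_roots ⟨hr'lo, hr'r.trans hr.2⟩
  have hk : 0 ≤ c * τ := by positivity
  have hr' : 0 < r' := by nlinarith [mul_nonneg hk hm₀.le]
  have hGlow : ∀ S ∈ Ioo SB ST, -(m₀ * (ST - S)) ≤ G S := fun S hS' => by
    have := (convex_Icc SB ST).image_sub_le_mul_sub_of_deriv_le hGc.continuousOn
      ((hGc.differentiableOn one_ne_zero).mono interior_subset)
      (fun x hx => hm x (interior_subset hx)) S (Ioo_subset_Icc_self hS') ST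
      (right_mem_Icc.2 hS.le) hS'.2.le
    linarith
  have hle := line_le_orbit_of_quadratic_neg hk hr' hquad hpc.continuousOn
    ((hpc.differentiableOn one_ne_zero).mono Ioo_subset_Icc_self)
    (fun S hS' => hP S (Ioo_subset_Icc_self hS')) hGlow hwB hwc hode S₀ hS₀
  linarith [mul_neg_of_pos_of_neg (sub_pos.2 hr'r) (sub_neg.2 hS₀.2)]

/-- For small τ and r ∈ (r⁻, r⁺) the orbit w stays above the line
p(S) + r(S − S_T) on (S_B, S_T). -/
theorem stmt13 (SB ST c τ m₀ Pl r : ℝ) (hS : SB < ST) (hc : 0 < c) (hτ : 0 < τ)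
    (hm₀ : 0 < m₀) (hPl : 0 < Pl)
    (p G w : ℝ → ℝ)
    (hpc : ContDiffOn ℝ 1 p (Set.Icc SB ST)) (hpanti : StrictAntiOn p (Set.Icc SB ST))
    (hP : ∀ S ∈ Set.Icc SB ST, Pl ≤ -deriv p S)
    (hGc : ContDiffOn ℝ 1 G (Set.Icc SB ST)) (hGT : G ST = 0)
    (hGle : ∀ S ∈ Set.Icc SB ST, G S ≤ 0)
    (hm : ∀ S ∈ Set.Icc SB ST, deriv G S ≤ m₀)
    (hwB : w SB = p SB)
    (hwlt : ∀ S ∈ Set.Ioo SB ST, w S < p S)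
    (hwc : ContinuousOn w (Set.Icc SB ST))
    (hode : ∀ S ∈ Set.Ioo SB ST, HasDerivAt w (c * τ * G S / (p S - w S)) S)
    (hτsmall : τ < Pl ^ 2 / (4 * c * m₀))
    (hr : r ∈ Set.Ioo (Pl / 2 * (1 - Real.sqrt (1 - 4 * c * τ * m₀ / Pl ^ 2)))
                      (Pl / 2 * (1 + Real.sqrt (1 - 4 * c * τ * m₀ / Pl ^ 2)))) :
    ∀ S ∈ Set.Ioo SB ST, p S + r * (S - ST) < w S :=
  stmt13_general SB ST c τ m₀ Pl r hS hc hτ hm₀ hPl p G w hpc hP hGc hGT hm hwB hwc hode hr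
end
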